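/- arXiv:2202.10766 — 2 statements merged into one kernel-verified Lean document; each statement's English description precedes it below -/
import Mathlib

section
/- For every Datalog program Σ and annotated database (D,K,λ) with K a commutative ω-continuous semiring, the K-annotated interpretation (I₀,μ₀) defined by I₀ = { α : Σ,D ⊨ α } and μ₀(α) = AT(Σ,D,K,λ,α) for every α ∈ I₀ is a K-annotated model of Σ and (D,K,λ). -/
attribute [local instance] Classical.propDecidable

namespace Datalog

/-- Terms are built from constants and variables. -/
inductive Term (C V : Type) : Type
  | const : C → Term C V
  | var : V → Term C V

/-- An atom over predicates `P` with arguments of type `τ`. -/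
structure Atom (P τ : Type) : Type where
  pred : P
  args : List τ

/-- A fact (ground atom) has constants as arguments. -/
abbrev Fact (P C : Type) := Atom P C

/-- Substitution of a variable assignment in a term. -/
def Term.subst {C : Type} {n : ℕ} (σ : Fin n → C) : Term C (Fin n) → C
  | Term.const c => c
  | Term.var v => σ v

/-- Substitution of a variable assignment in an atom, producing a fact. -/
def Atom.subst {P C : Type} {n : ℕ} (σ : Fin n → C) (a : Atom P (Term C (Fin n))) : Fact P C :=
  ⟨a.pred, a.args.map (Term.subst σ)⟩

/-- Renaming of predicates in an atom. -/
def Atom.mapPred {P Q τ : Type} (f : P → Q) (a : Atom P τ) : Atom Q τ := ⟨f a.pred, a.args⟩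

/-- Turn a fact into a (ground) rule atom. -/
def Atom.toRuleAtom {P C : Type} (n : ℕ) (a : Fact P C) : Atom P (Term C (Fin n)) :=
  ⟨a.pred, a.args.map Term.const⟩

/-- A (normalized) Datalog rule `φ(x⃗,y⃗) → H(x⃗)`: the body is a conjunction of atoms over
variables `x⃗ ∪ y⃗` (every variable of the rule occurs in the body), the head a single atom. -/
structure Rule (P C : Type) : Type where
  nvars : ℕ
  nbody : ℕ
  body : Fin nbody → Atom P (Term C (Fin nvars))
  head : Atom P (Term C (Fin nvars))
  vars_in_body : ∀ v : Fin nvars, ∃ i : Fin nbody, Term.var v ∈ (body i).args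

variable {P C K : Type}

/-- A set of facts is closed under the rules of a program. -/
def ClosedUnder (prog : Set (Rule P C)) (I : Set (Fact P C)) : Prop :=
  ∀ r ∈ prog, ∀ σ : Fin r.nvars → C,
    (∀ i, (r.body i).subst σ ∈ I) → r.head.subst σ ∈ I

/-- `Σ, D ⊨ α` : the fact `α` belongs to every set of facts containing `D`
and closed under the rules of `Σ`. -/
def Entails (prog : Set (Rule P C)) (D : Set (Fact P C)) (a : Fact P C) : Prop :=
  ∀ I : Set (Fact P C), D ⊆ I → ClosedUnder prog I → a ∈ I

/-- Derivation trees of a fact w.r.t. a program and a database: leaves are labeled by facts of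
`D`; an inner node is labeled by a rule `r ∈ Σ` together with a homomorphism `σ`, its children
corresponding bijectively to the body atoms of `r`, and derives the fact `σ(head r)`. -/
inductive DTree {P C : Type} (prog : Set (Rule P C)) (D : Set (Fact P C)) : Fact P C → Type
  | leaf (a : Fact P C) (ha : a ∈ D) : DTree prog D a
  | node (r : Rule P C) (hr : r ∈ prog) (σ : Fin r.nvars → C)
      (children : ∀ i : Fin r.nbody, DTree prog D ((r.body i).subst σ)) :
      DTree prog D (r.head.subst σ)

namespace DTree

variable {prog : Set (Rule P C)} {D : Set (Fact P C)}

/-- `Λ(t)`: the product of the annotations of the leaves of `t`. -/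
def weight [CommSemiring K] (lam : Fact P C → K) : ∀ {a : Fact P C}, DTree prog D a → K
  | _, .leaf a _ => lam a
  | _, .node r _ _ ch => ∏ i : Fin r.nbody, weight lam (ch i)

/-- The depth of a derivation tree. -/
def depth : ∀ {a : Fact P C}, DTree prog D a → ℕ
  | _, .leaf _ _ => 0
  | _, .node r _ _ ch => (Finset.univ.sup fun i : Fin r.nbody => depth (ch i)) + 1

/-- A derivation tree of `a` is of minimal depth if no derivation tree of `a` is of
smaller depth. -/
def minimalDepth {a : Fact P C} (t : DTree prog D a) : Prop :=
  ∀ t' : DTree prog D a, t.depth ≤ t'.depth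

/-- A derivation tree is hereditary minimal-depth if every subtree rooted at an inner node
is a minimal-depth derivation tree of the fact it derives. -/
def hereditaryMinimal : ∀ {a : Fact P C}, DTree prog D a → Prop
  | _, .leaf _ _ => True
  | _, .node r hr σ ch =>
      minimalDepth (.node r hr σ ch) ∧ ∀ i, hereditaryMinimal (ch i)

/-- `t.avoid s` : no fact labeling a node of `t` belongs to `s`, nor is repeated along a
root-to-leaf path. -/
def avoid : Set (Fact P C) → ∀ {a : Fact P C}, DTree prog D a → Prop
  | s, _, .leaf a _ => a ∉ s
  | s, _, .node r _ σ ch =>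
      r.head.subst σ ∉ s ∧ ∀ i, avoid (insert (r.head.subst σ) s) (ch i)

/-- A derivation tree is non-recursive if it does not contain two nodes labeled with the same
fact such that one is a descendant of the other. -/
def nonRecursive {a : Fact P C} (t : DTree prog D a) : Prop := t.avoid ∅

/-- `t.hasLeaf x` : `x` labels some leaf of `t`. -/
def hasLeaf (x : Fact P C) : ∀ {a : Fact P C}, DTree prog D a → Prop
  | _, .leaf a _ => a = x
  | _, .node _ _ _ ch => ∃ i, hasLeaf x (ch i)

end DTree

/-- The finite partial sums of `f` over the set `S`. -/
def partialSums {T : Type} [AddCommMonoid K] (S : Set T) (f : T → K) : Set K :=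
  { x | ∃ F : Finset T, ↑F ⊆ S ∧ x = ∑ t ∈ F, f t }

/-- The (possibly infinite) sum of `f` over `S`, i.e. the least upper bound of the finite
partial sums (junk value `0` if no least upper bound exists). -/
noncomputable def setSum {T : Type} [AddCommMonoid K] [PartialOrder K]
    (S : Set T) (f : T → K) : K :=
  if h : ∃ s, IsLUB (partialSums S f) s then h.choose else 0

/-- The greatest lower bound of a set of semiring elements (junk value `0` if none exists). -/
noncomputable def setInf [Zero K] [PartialOrder K] (S : Set K) : K :=
  if h : ∃ z, IsGLB S z then h.choose else 0

/-- A commutative ω-continuous semiring: the natural order `a ≤ b ↔ ∃ c, a + c = b` is a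
partial order, every ω-chain has a least upper bound, and `+` and `×` preserve these
least upper bounds. -/
class OmegaCommSemiring (K : Type) extends CommSemiring K, PartialOrder K where
  le_iff_exists_add : ∀ a b : K, a ≤ b ↔ ∃ c, a + c = b
  chain_lub : ∀ f : ℕ → K, Monotone f → ∃ s, IsLUB (Set.range f) s
  add_lub : ∀ (f : ℕ → K) (a s : K), Monotone f → IsLUB (Set.range f) s →
    IsLUB (Set.range fun n => a + f n) (a + s)
  mul_lub : ∀ (f : ℕ → K) (a s : K), Monotone f → IsLUB (Set.range f) s →
    IsLUB (Set.range fun n => a * f n) (a * s)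

/-- A positive semiring: a product is zero iff one factor is, a sum is zero iff both
summands are. -/
def PositiveSemiring (K : Type) [CommSemiring K] : Prop :=
  (∀ a b : K, a * b = 0 ↔ a = 0 ∨ b = 0) ∧ (∀ a b : K, a + b = 0 ↔ a = 0 ∧ b = 0)

/-- An annotated database: a set of facts together with an annotation function assigning a
semiring element to every fact (`0` outside the database). -/
structure AnnDB (P C K : Type) [Zero K] : Type where
  facts : Set (Fact P C)
  ann : Fact P C → K
  ann_eq_zero : ∀ a ∉ facts, ann a = 0

/-- Union of two annotated databases: annotations are added pointwise. -/
noncomputable def AnnDB.union [AddCommMonoid K] (d₁ d₂ : AnnDB P C K) : AnnDB P C K where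
  facts := d₁.facts ∪ d₂.facts
  ann a := d₁.ann a + d₂.ann a
  ann_eq_zero a ha := by
    show d₁.ann a + d₂.ann a = 0
    rw [d₁.ann_eq_zero a fun h => ha (Set.mem_union_left _ h),
      d₂.ann_eq_zero a fun h => ha (Set.mem_union_right _ h), add_zero]

/-- The facts derivable from `I` by one application of a rule of `prog`. -/
def derivable (prog : Set (Rule P C)) (I : Set (Fact P C)) : Set (Fact P C) :=
  { a | ∃ r ∈ prog, ∃ σ : Fin r.nvars → C,
      (∀ i, (r.body i).subst σ ∈ I) ∧ r.head.subst σ = a }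

/-- The relational provenance of the immediate consequences: the sum over all rules and
homomorphisms deriving `a` of the product of the annotations of the body facts. -/
noncomputable def ruleSum [CommSemiring K] (prog : Set (Rule P C)) (I : Set (Fact P C))
    (lam : Fact P C → K) (a : Fact P C) : K :=
  ∑ᶠ (p : (r : Rule P C) × (Fin r.nvars → C))
      (_ : p.1 ∈ prog ∧ (∀ i, (p.1.body i).subst p.2 ∈ I) ∧ p.1.head.subst p.2 = a),
    ∏ i : Fin p.1.nbody, lam ((p.1.body i).subst p.2)

/-- The annotation-aware immediate consequence operator `T_Σ`. -/
noncomputable def Tcons [CommSemiring K] (prog : Set (Rule P C)) (db : AnnDB P C K) :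
    AnnDB P C K where
  facts := derivable prog db.facts
  ann a := if a ∈ derivable prog db.facts then ruleSum prog db.facts db.ann a else 0
  ann_eq_zero a ha := if_neg ha

/-- The operator `Δ_Σ`: `T_Σ` restricted to the newly derived facts. -/
noncomputable def Dcons [CommSemiring K] (prog : Set (Rule P C)) (db : AnnDB P C K) :
    AnnDB P C K where
  facts := (Tcons prog db).facts \ db.facts
  ann a := if a ∈ (Tcons prog db).facts \ db.facts then (Tcons prog db).ann a else 0
  ann_eq_zero a ha := if_neg ha

/-- The naive evaluation sequence `I_n^0 := (D,K,λ)`, `I_n^{i+1} := T_Σ(I_n^i) ∪ (D,K,λ)`. -/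
noncomputable def naiveSeq [CommSemiring K] (prog : Set (Rule P C)) (db : AnnDB P C K) :
    ℕ → AnnDB P C K
  | 0 => db
  | i + 1 => (Tcons prog (naiveSeq prog db i)).union db

/-- The naive execution provenance semantics: the least upper bound of the annotations of `a`
along the naive evaluation sequence (and `0` if `a` is never derived). -/
noncomputable def NE [CommSemiring K] [PartialOrder K] (prog : Set (Rule P C))
    (db : AnnDB P C K) (a : Fact P C) : K :=
  if ∃ i, a ∈ (naiveSeq prog db i).facts then
    (if h : ∃ s, IsLUB (Set.range fun i => (naiveSeq prog db i).ann a) s then h.choose else 0)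
  else 0

/-- The optimized naive evaluation sequence, which stops as soon as the target fact is
derived. -/
noncomputable def optSeq [CommSemiring K] (prog : Set (Rule P C)) (db : AnnDB P C K)
    (target : Fact P C) : ℕ → AnnDB P C K
  | 0 => db
  | i + 1 =>
      if target ∈ (optSeq prog db target i).facts then optSeq prog db target i
      else (Tcons prog (optSeq prog db target i)).union db

/-- The optimized execution provenance semantics: the annotation of the target fact at the
stabilization point of the optimized naive evaluation sequence. -/
noncomputable def OE [CommSemiring K] (prog : Set (Rule P C)) (db : AnnDB P C K)
    (target : Fact P C) : K :=
  if h : ∃ k, ∀ ℓ, k ≤ ℓ → optSeq prog db target ℓ = optSeq prog db target k then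
    (optSeq prog db target h.choose).ann target
  else 0

/-- The seminaive evaluation sequence `I_sn^0 := (D,K,λ)`, `I_sn^{i+1} := I_sn^i ∪ Δ_Σ(I_sn^i)`. -/
noncomputable def semiSeq [CommSemiring K] (prog : Set (Rule P C)) (db : AnnDB P C K) :
    ℕ → AnnDB P C K
  | 0 => db
  | i + 1 => (semiSeq prog db i).union (Dcons prog (semiSeq prog db i))

/-- The seminaive execution provenance semantics: the annotation of the fact at the
stabilization point of the seminaive evaluation sequence. -/
noncomputable def SNE [CommSemiring K] (prog : Set (Rule P C)) (db : AnnDB P C K)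
    (a : Fact P C) : K :=
  if h : ∃ k, ∀ ℓ, k ≤ ℓ → semiSeq prog db ℓ = semiSeq prog db k then
    (semiSeq prog db h.choose).ann a
  else 0

/-- The all-tree provenance semantics `AT`: the (possibly infinite) sum, over all derivation
trees of `a`, of the product of the annotations of the leaves. -/
noncomputable def AT [CommSemiring K] [PartialOrder K] (prog : Set (Rule P C))
    (db : AnnDB P C K) (a : Fact P C) : K :=
  setSum (Set.univ : Set (DTree prog db.facts a)) fun t => t.weight db.ann

/-- The non-recursive tree provenance semantics `NRT`. -/
noncomputable def NRT [CommSemiring K] (prog : Set (Rule P C)) (db : AnnDB P C K)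
    (a : Fact P C) : K :=
  ∑ᶠ (t : DTree prog db.facts a) (_ : t.nonRecursive), t.weight db.ann

/-- The minimal depth tree provenance semantics `MDT`. -/
noncomputable def MDT [CommSemiring K] (prog : Set (Rule P C)) (db : AnnDB P C K)
    (a : Fact P C) : K :=
  ∑ᶠ (t : DTree prog db.facts a) (_ : t.minimalDepth), t.weight db.ann

/-- The hereditary minimal depth tree provenance semantics `HMDT`. -/
noncomputable def HMDT [CommSemiring K] (prog : Set (Rule P C)) (db : AnnDB P C K)
    (a : Fact P C) : K :=
  ∑ᶠ (t : DTree prog db.facts a) (_ : t.hereditaryMinimal), t.weight db.ann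

/-- `σ'` agrees with `σ` on the head variables of `r` (i.e. `h'(x⃗) = h(x⃗)`). -/
def headAgree (r : Rule P C) (σ σ' : Fin r.nvars → C) : Prop :=
  ∀ v : Fin r.nvars, Term.var v ∈ r.head.args → σ' v = σ v

/-- A `K`-annotated interpretation `(I,μ)` is a model of `Σ` and `(D,K,λ)`. -/
def IsAnnModel [CommSemiring K] [PartialOrder K] (prog : Set (Rule P C)) (db : AnnDB P C K)
    (I : Set (Fact P C)) (μ : Fact P C → K) : Prop :=
  db.facts ⊆ I ∧ (∀ a ∈ db.facts, db.ann a ≤ μ a) ∧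
  ∀ r ∈ prog, ∀ σ : Fin r.nvars → C, (∀ i, (r.body i).subst σ ∈ I) →
    r.head.subst σ ∈ I ∧
    setSum {σ' : Fin r.nvars → C | (∀ i, (r.body i).subst σ' ∈ I) ∧ headAgree r σ σ'}
        (fun σ' => ∏ i : Fin r.nbody, μ ((r.body i).subst σ'))
      ≤ μ (r.head.subst σ)

/-- The annotated model-based provenance semantics `AM`: the greatest lower bound, over all
annotated models, of the annotation of `a` (and `0` if `a` is not entailed). -/
noncomputable def AM [CommSemiring K] [PartialOrder K] (prog : Set (Rule P C))
    (db : AnnDB P C K) (a : Fact P C) : K :=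
  if Entails prog db.facts a then
    setInf { x | ∃ I μ, IsAnnModel prog db I μ ∧ μ a = x }
  else 0

/-- A `K`-set-annotated interpretation `(I,μ)` is a model of `Σ` and `(D,K,λ)`. -/
def IsSetAnnModel [CommSemiring K] (prog : Set (Rule P C)) (db : AnnDB P C K)
    (I : Set (Fact P C)) (μ : Fact P C → Set K) : Prop :=
  db.facts ⊆ I ∧ (∀ a ∈ db.facts, db.ann a ∈ μ a) ∧
  ∀ r ∈ prog, ∀ σ : Fin r.nvars → C, (∀ i, (r.body i).subst σ ∈ I) →
    r.head.subst σ ∈ I ∧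
    ∀ g : Fin r.nbody → K, (∀ i, g i ∈ μ ((r.body i).subst σ)) →
      (∏ i, g i) ∈ μ (r.head.subst σ)

/-- The set-annotated model-based provenance semantics `SAM`: the sum of the elements of the
intersection, over all set-annotated models, of the annotation set of `a`. -/
noncomputable def SAM [CommSemiring K] [PartialOrder K] (prog : Set (Rule P C))
    (db : AnnDB P C K) (a : Fact P C) : K :=
  setSum { k : K | ∀ I μ, IsSetAnnModel prog db I μ → k ∈ μ a } id

/-- The schema of a program: the predicates occurring in its rules. -/
def progSchema (prog : Set (Rule P C)) : Set P :=
  { p | ∃ r ∈ prog, r.head.pred = p ∨ ∃ i, (r.body i).pred = p }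

/-- The schema of a database: the predicates occurring in its facts. -/
def dbSchema (D : Set (Fact P C)) : Set P := { p | ∃ a ∈ D, a.pred = p }

/-- The domain of a database: the constants occurring in its facts. -/
def dbConsts (D : Set (Fact P C)) : Set C := { c | ∃ a ∈ D, c ∈ a.args }

/-- A ground rule built from a list of facts (the body) and a fact (the head). -/
def factRule (body : List (Fact P C)) (head : Fact P C) : Rule P C where
  nvars := 0
  nbody := body.length
  body := fun i => (body.get i).toRuleAtom 0
  head := head.toRuleAtom 0
  vars_in_body := fun v => v.elim0

/-- A ground instance of a rule. -/
def Rule.ground (r : Rule P C) (σ : Fin r.nvars → C) : Rule P C where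
  nvars := 0
  nbody := r.nbody
  body := fun i => ((r.body i).subst σ).toRuleAtom 0
  head := (r.head.subst σ).toRuleAtom 0
  vars_in_body := fun v => v.elim0

/-- The grounding `Σ_D` of a program w.r.t. the domain of a database. -/
def grounding (prog : Set (Rule P C)) (D : Set (Fact P C)) : Set (Rule P C) :=
  { r' | ∃ r ∈ prog, ∃ σ : Fin r.nvars → C, (∀ v, σ v ∈ dbConsts D) ∧ r' = r.ground σ }

/-- Renaming of predicates in a rule. -/
def Rule.mapPred {Q : Type} (f : P → Q) (r : Rule P C) : Rule Q C where
  nvars := r.nvars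
  nbody := r.nbody
  body := fun i => (r.body i).mapPred f
  head := r.head.mapPred f
  vars_in_body := fun v => r.vars_in_body v

/-- An adornment of a rule: exactly one body atom is adorned (sent to the `Sum.inr` copy of
the predicates), the head is adorned or not, all the other atoms keep their predicates
(`Sum.inl` copy). -/
def adornRule (r : Rule P C) (i : Fin r.nbody) (adornHead : Bool) : Rule (P ⊕ P) C where
  nvars := r.nvars
  nbody := r.nbody
  body := fun j => if j = i then (r.body j).mapPred Sum.inr else (r.body j).mapPred Sum.inl
  head := if adornHead then r.head.mapPred Sum.inr else r.head.mapPred Sum.inl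
  vars_in_body := by
    intro v
    obtain ⟨j, hj⟩ := r.vars_in_body v
    refine ⟨j, ?_⟩
    split <;> exact hj

/-- The set of adornments of a rule. -/
def adornedRules (r : Rule P C) : Set (Rule (P ⊕ P) C) :=
  { r' | ∃ (i : Fin r.nbody) (b : Bool), r' = adornRule r i b }


/-! Every instance of a rule body, together with derivation trees of its facts, yields a
derivation tree of the head, and distinct choices give distinct trees (the homomorphism is
recovered from the body facts). So once each `AT β` of a body fact is replaced by a finite
partial sum of tree weights, a finite partial sum of `∑_{h'} ∏_β AT β` becomes a sum of
weights of distinct trees of the head, hence is at most `AT` of the head. Since `Σ` and `D`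
are finite there are countably many trees, so each `AT β` is the supremum of an ω-chain of
partial sums, and ω-continuity carries the bound over to the suprema. -/

section OmegaCommSemiring

variable {K : Type} [OmegaCommSemiring K]

instance : CanonicallyOrderedAdd K where
  exists_add_of_le {a b} h := by
    obtain ⟨c, rfl⟩ := (OmegaCommSemiring.le_iff_exists_add a b).1 h
    exact ⟨c, rfl⟩
  le_add_self a b := (OmegaCommSemiring.le_iff_exists_add _ _).2 ⟨b, add_comm a b⟩
  le_self_add a b := (OmegaCommSemiring.le_iff_exists_add _ _).2 ⟨b, rfl⟩

instance : IsOrderedAddMonoid K := CanonicallyOrderedAdd.toIsOrderedAddMonoid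

instance : IsOrderedMonoid K := CanonicallyOrderedAdd.toIsOrderedMonoid

namespace OmegaCommSemiring

theorem isLUB_range_op {op : K → K → K} (hcomm : ∀ a b, op a b = op b a)
    (hmono : ∀ {a b c d}, a ≤ b → c ≤ d → op a c ≤ op b d)
    (hcont : ∀ (f : ℕ → K) (a s : K), Monotone f → IsLUB (Set.range f) s →
      IsLUB (Set.range fun n => op a (f n)) (op a s))
    {f g : ℕ → K} {s t : K} (hf : Monotone f) (hg : Monotone g)
    (hs : IsLUB (Set.range f) s) (ht : IsLUB (Set.range g) t) :
    IsLUB (Set.range fun n => op (f n) (g n)) (op s t) := by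
  refine ⟨?_, fun u hu => ?_⟩
  · rintro _ ⟨n, rfl⟩
    exact hmono (hs.1 ⟨n, rfl⟩) (ht.1 ⟨n, rfl⟩)
  have hft : ∀ n, op (f n) t ≤ u := fun n => (hcont g (f n) t hg ht).2 <| by
    rintro _ ⟨m, rfl⟩
    exact (hmono (hf (le_max_left n m)) (hg (le_max_right n m))).trans (hu ⟨max n m, rfl⟩)
  rw [hcomm]
  exact (hcont f t s hf hs).2 <| by
    rintro _ ⟨n, rfl⟩
    simpa only [hcomm t] using hft n

theorem isLUB_range_sum {ι : Type} (F : Finset ι) {f : ι → ℕ → K} {s : ι → K}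
    (hf : ∀ i, Monotone (f i)) (hs : ∀ i, IsLUB (Set.range (f i)) (s i)) :
    IsLUB (Set.range fun n => ∑ i ∈ F, f i n) (∑ i ∈ F, s i) := by
  classical
  induction F using Finset.induction_on with
  | empty => simp [Set.range_const]
  | insert i F hi ih =>
    simp only [Finset.sum_insert hi]
    exact isLUB_range_op add_comm add_le_add add_lub (hf i)
      (Monotone.finsetSum fun j _ => hf j) (hs i) ih

theorem isLUB_range_prod {ι : Type} (F : Finset ι) {f : ι → ℕ → K} {s : ι → K}
    (hf : ∀ i, Monotone (f i)) (hs : ∀ i, IsLUB (Set.range (f i)) (s i)) :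
    IsLUB (Set.range fun n => ∏ i ∈ F, f i n) (∏ i ∈ F, s i) := by
  classical
  induction F using Finset.induction_on with
  | empty => simp [Set.range_const]
  | insert i F hi ih =>
    simp only [Finset.prod_insert hi]
    exact isLUB_range_op mul_comm mul_le_mul' mul_lub (hf i)
      (Monotone.finsetProd' fun j _ => hf j) (hs i) ih

end OmegaCommSemiring

section setSum

variable {T : Type} {S : Set T} {f : T → K}

theorem setSum_eq_of_isLUB {s : K} (h : IsLUB (partialSums S f) s) : setSum S f = s := by
  have hex : ∃ s, IsLUB (partialSums S f) s := ⟨s, h⟩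
  rw [setSum, dif_pos hex]
  exact hex.choose_spec.unique h

theorem setSum_le_of_mem_upperBounds {B : K} (hB : B ∈ upperBounds (partialSums S f)) :
    setSum S f ≤ B := by
  rw [setSum]
  split
  · next h => exact h.choose_spec.2 hB
  · exact zero_le

theorem exists_monotone_finset_exhausting [Countable T] (S : Set T) :
    ∃ A : ℕ → Finset T, Monotone A ∧ (∀ n, ↑(A n) ⊆ S) ∧
      ∀ F : Finset T, ↑F ⊆ S → ∃ n, F ⊆ A n := by
  classical
  obtain ⟨e, he⟩ := exists_injective_nat T
  have hfinite : ∀ n, {t | t ∈ S ∧ e t < n}.Finite := fun n =>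
    ((Set.finite_Iio n).preimage he.injOn).subset fun t ht => ht.2
  refine ⟨fun n => (hfinite n).toFinset, fun m n hmn t => ?_, fun n t ht => ?_,
    fun F hF => ⟨F.sup e + 1, fun t ht => ?_⟩⟩
  · simp only [Set.Finite.mem_toFinset, Set.mem_ofPred_eq]
    exact And.imp_right fun h => h.trans_le hmn
  · exact ((hfinite n).mem_toFinset.1 ht).1
  · exact (hfinite _).mem_toFinset.2 ⟨hF ht, Nat.lt_succ_of_le (Finset.le_sup ht)⟩

theorem isLUB_setSum_of_exhausting {A : ℕ → Finset T} (hA : Monotone A)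
    (hAS : ∀ n, ↑(A n) ⊆ S) (hexh : ∀ F : Finset T, ↑F ⊆ S → ∃ n, F ⊆ A n) :
    IsLUB (Set.range fun n => ∑ t ∈ A n, f t) (setSum S f) := by
  have hbounds : upperBounds (Set.range fun n => ∑ t ∈ A n, f t) =
      upperBounds (partialSums S f) := by
    ext u
    refine ⟨fun hu => ?_, fun hu => ?_⟩
    · rintro _ ⟨F, hF, rfl⟩
      obtain ⟨n, hn⟩ := hexh F hF
      exact (Finset.sum_le_sum_of_subset hn).trans (hu ⟨n, rfl⟩)
    · rintro _ ⟨n, rfl⟩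
      exact hu ⟨A n, hAS n, rfl⟩
  obtain ⟨s, hs⟩ := OmegaCommSemiring.chain_lub _ fun m n hmn =>
    Finset.sum_le_sum_of_subset (f := f) (hA hmn)
  have hsum : IsLUB (partialSums S f) s := by
    unfold IsLUB at hs ⊢
    rwa [← hbounds]
  rwa [setSum_eq_of_isLUB hsum]

theorem le_setSum [Countable T] {x : K} (hx : x ∈ partialSums S f) : x ≤ setSum S f := by
  obtain ⟨A, hA, hAS, hexh⟩ := exists_monotone_finset_exhausting S
  obtain ⟨F, hF, rfl⟩ := hx
  obtain ⟨n, hn⟩ := hexh F hF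
  exact (Finset.sum_le_sum_of_subset hn).trans
    ((isLUB_setSum_of_exhausting hA hAS hexh).1 ⟨n, rfl⟩)

end setSum

theorem sum_prod_setSum_le {X ι : Type} [Fintype ι] {T : X → ι → Type}
    [∀ x i, Countable (T x i)] (F : Finset X) (f : ∀ x i, T x i → K) {B : K}
    (h : ∀ S : ∀ x i, Finset (T x i), ∑ x ∈ F, ∏ i, ∑ t ∈ S x i, f x i t ≤ B) :
    ∑ x ∈ F, ∏ i, setSum Set.univ (f x i) ≤ B := by
  choose A hA hAS hexh using fun x i => exists_monotone_finset_exhausting (Set.univ : Set (T x i))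
  have hlub := OmegaCommSemiring.isLUB_range_sum F
    (fun x => Monotone.finsetProd' fun i _ m n hmn => Finset.sum_le_sum_of_subset (hA x i hmn))
    (fun x => OmegaCommSemiring.isLUB_range_prod Finset.univ
      (fun i m n hmn => Finset.sum_le_sum_of_subset (f := f x i) (hA x i hmn))
      (fun i => isLUB_setSum_of_exhausting (hA x i) (hAS x i) (hexh x i)))
  exact hlub.2 <| by
    rintro _ ⟨n, rfl⟩
    exact h fun x i => A x i n

end OmegaCommSemiring

section Derivations

variable {prog : Set (Rule P C)} {D : Set (Fact P C)}

theorem Rule.eq_of_body_subst_eq (r : Rule P C) {σ σ' : Fin r.nvars → C}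
    (h : ∀ i, (r.body i).subst σ = (r.body i).subst σ') : σ = σ' := by
  funext v
  obtain ⟨i, hv⟩ := r.vars_in_body v
  exact List.map_inj_left.1 (congrArg Atom.args (h i)) _ hv

theorem Rule.head_subst_eq_of_headAgree (r : Rule P C) {σ σ' : Fin r.nvars → C}
    (h : headAgree r σ σ') : r.head.subst σ' = r.head.subst σ := by
  refine congrArg (Atom.mk r.head.pred) (List.map_congr_left fun t ht => ?_)
  cases t with
  | const c => rfl
  | var v => exact h v ht

theorem Entails.of_mem {a : Fact P C} (ha : a ∈ D) : Entails prog D a :=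
  fun _ hD _ => hD ha

theorem Entails.head_subst {r : Rule P C} (hr : r ∈ prog) {σ : Fin r.nvars → C}
    (h : ∀ i, Entails prog D ((r.body i).subst σ)) : Entails prog D (r.head.subst σ) :=
  fun I hD hI => hI r hr σ fun i => h i I hD hI

namespace DTree

theorem weight_cast [CommSemiring K] (lam : Fact P C → K) {a b : Fact P C} (h : a = b)
    (t : DTree prog D a) : (h ▸ t : DTree prog D b).weight lam = t.weight lam := by
  subst h
  rfl

/-- The substitution at an inner node is forgotten; by `Rule.vars_in_body` it is determined
by the facts derived by the children. -/
def skeleton : ∀ {a : Fact P C}, DTree prog D a →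
    WType fun x : D ⊕ prog => Fin (x.elim (fun _ => 0) fun r => r.1.nbody)
  | _, .leaf a ha => ⟨.inl ⟨a, ha⟩, Fin.elim0⟩
  | _, .node r hr _ ch => ⟨.inr ⟨r, hr⟩, fun i => (ch i).skeleton⟩

theorem skeleton_cast {a b : Fact P C} (h : a = b) (t : DTree prog D a) :
    (h ▸ t : DTree prog D b).skeleton = t.skeleton := by
  subst h
  rfl

theorem skeleton_children_eq {r : Rule P C} {hr hr' : r ∈ prog} {σ σ' : Fin r.nvars → C}
    {ch : ∀ i, DTree prog D ((r.body i).subst σ)}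
    {ch' : ∀ i, DTree prog D ((r.body i).subst σ')}
    (h : (node r hr σ ch).skeleton = (node r hr' σ' ch').skeleton) (i : Fin r.nbody) :
    (ch i).skeleton = (ch' i).skeleton := by
  injection h with _ hch
  exact congrFun hch i

theorem eq_of_skeleton_eq {a : Fact P C} (t : DTree prog D a) {b : Fact P C} (t' : DTree prog D b)
    (h : t.skeleton = t'.skeleton) : a = b ∧ t ≍ t' := by
  induction t generalizing b with
  | leaf x hx =>
    cases t' with
    | leaf y hy =>
      injection h with hxy
      cases Subtype.ext_iff.1 (Sum.inl_injective hxy)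
      exact ⟨rfl, .rfl⟩
    | node => injection h with h; cases h
  | node r hr σ ch ih =>
    cases t' with
    | leaf => injection h with h; cases h
    | node r' hr' σ' ch' =>
      have hr : r = r' := by
        injection h with hrr
        exact Subtype.ext_iff.1 (Sum.inr_injective hrr)
      subst hr
      have hchildren i := ih i (ch' i) (skeleton_children_eq h i)
      obtain rfl := r.eq_of_body_subst_eq fun i => (hchildren i).1
      obtain rfl : ch = ch' := funext fun i => eq_of_heq (hchildren i).2
      exact ⟨rfl, .rfl⟩

instance [Countable prog] [Countable D] {a : Fact P C} : Countable (DTree prog D a) := by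
  have := Encodable.ofCountable prog
  have := Encodable.ofCountable D
  exact Function.Injective.countable (f := skeleton) fun t t' h =>
    eq_of_heq (eq_of_skeleton_eq t t' h).2

end DTree

end Derivations

section AllTrees

variable [OmegaCommSemiring K] {prog : Set (Rule P C)} (db : AnnDB P C K)
  [Countable prog] [Countable db.facts]

theorem ann_le_AT {a : Fact P C} (ha : a ∈ db.facts) : db.ann a ≤ AT prog db a :=
  le_setSum ⟨{.leaf a ha}, Set.subset_univ _, (Finset.sum_singleton _ _).symm⟩

theorem sum_prod_sum_weight_le_AT {r : Rule P C} (hr : r ∈ prog) {a : Fact P C}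
    (F : Finset (Fin r.nvars → C)) (hF : ∀ σ ∈ F, r.head.subst σ = a)
    (S : ∀ σ i, Finset (DTree prog db.facts ((r.body i).subst σ))) :
    ∑ σ ∈ F, ∏ i, ∑ t ∈ S σ i, t.weight db.ann ≤ AT prog db a := by
  classical
  let g : (Σ σ : F, ∀ i, DTree prog db.facts ((r.body i).subst σ)) → DTree prog db.facts a :=
    fun x => hF x.1 x.1.2 ▸ .node r hr x.1.1 x.2
  have hg : g.Injective := by
    rintro ⟨σ, ch⟩ ⟨σ', ch'⟩ h
    have hskel := congrArg DTree.skeleton h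
    simp only [g, DTree.skeleton_cast] at hskel
    have hchildren i := DTree.eq_of_skeleton_eq _ _ (DTree.skeleton_children_eq hskel i)
    obtain rfl : σ = σ' := Subtype.ext (r.eq_of_body_subst_eq fun i => (hchildren i).1)
    obtain rfl : ch = ch' := funext fun i => eq_of_heq (hchildren i).2
    rfl
  calc ∑ σ ∈ F, ∏ i, ∑ t ∈ S σ i, t.weight db.ann
      = ∑ σ ∈ F.attach, ∑ ch ∈ Fintype.piFinset (S σ), ∏ i, (ch i).weight db.ann := by
        rw [← Finset.sum_attach F]
        simp_rw [Finset.prod_univ_sum]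
    _ = ∑ x ∈ F.attach.sigma fun σ => Fintype.piFinset (S σ), (g x).weight db.ann := by
        rw [Finset.sum_sigma]
        simp only [g, DTree.weight_cast]
        rfl
    _ = ∑ t ∈ (F.attach.sigma fun σ => Fintype.piFinset (S σ)).image g, t.weight db.ann :=
        (Finset.sum_image hg.injOn).symm
    _ ≤ AT prog db a := le_setSum ⟨_, Set.subset_univ _, rfl⟩

end AllTrees

theorem statement_14_general (P C K : Type) [OmegaCommSemiring K]
    (prog : Set (Rule P C)) (hprog : prog.Finite)
    (db : AnnDB P C K) (hfin : db.facts.Finite) :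
    IsAnnModel prog db { a | Entails prog db.facts a } (fun a => AT prog db a) := by
  have := hprog.to_subtype
  have := hfin.to_subtype
  refine ⟨fun _ => Entails.of_mem, fun _ => ann_le_AT db, fun r hr σ hbody =>
    ⟨Entails.head_subst hr hbody, setSum_le_of_mem_upperBounds ?_⟩⟩
  rintro _ ⟨F, hF, rfl⟩
  exact sum_prod_setSum_le (T := fun σ' i => DTree prog db.facts ((r.body i).subst σ')) F _
    (sum_prod_sum_weight_le_AT db hr F fun σ' hσ' => r.head_subst_eq_of_headAgree (hF hσ').2)

/-- the interpretation of all entailed facts annotated by `AT` is an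
annotated model. -/
theorem statement_14 (P C K : Type) [OmegaCommSemiring K]
    (prog : Set (Rule P C)) (hprog : prog.Finite)
    (db : AnnDB P C K) (hfin : db.facts.Finite)
    (hann : ∀ a ∈ db.facts, db.ann a ≠ 0) :
    IsAnnModel prog db { a | Entails prog db.facts a } (fun a => AT prog db a) :=
  statement_14_general P C K prog hprog db hfin

end Datalog
end

section
/- If β ∈ D is necessary to Σ,D ⊨ α (i.e., Σ, D∖{β} ⊭ α), then β labels a leaf of every derivation tree of α w.r.t. Σ and D. Consequently, each of the semantics AT, NRT, MDT, and HMDT satisfies the Necessary Facts Property: there exists e ∈ K such that P(Σ,D,K,λ,α) = (∏_{β∈Nec} λ(β)) × e, where Nec is the set of facts necessary to Σ,D ⊨ α. -/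
attribute [local instance] Classical.propDecidable

namespace Datalog

variable {P C K : Type}

/-! A fact `β` with `Σ, D ∖ {β} ⊭ α` labels a leaf of every derivation tree `t` of `α`:
otherwise every leaf of `t` lies in `D ∖ {β}`, and reading `t` bottom-up puts `α` into every
set containing `D ∖ {β}` and closed under `Σ`. The necessary facts are thus distinct leaves of
`t`, so the product of their annotations divides `Λ(t)`, hence every finite sum of weights
(NRT, MDT, HMDT). For AT, the finitely many trees of depth at most `n` exhaust all trees, so AT
is the supremum of an ω-chain of finite sums, and multiplication by the common factor commutes
with it.
-/

/-- The constants that can occur in a fact derivable from `D` by `prog`. -/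
def consts (prog : Set (Rule P C)) (D : Set (Fact P C)) : Set C :=
  dbConsts D ∪ { c | ∃ r ∈ prog, Term.const c ∈ r.head.args }

lemma consts_finite {prog : Set (Rule P C)} {D : Set (Fact P C)} (hprog : prog.Finite)
    (hD : D.Finite) : (consts prog D).Finite := by
  refine (hD.biUnion fun a _ => a.args.finite_toSet).union
    (hprog.biUnion fun r _ => r.head.args.finite_toSet.preimage
      (Set.injOn_of_injective fun _ _ h => Term.const.inj h)) |>.subset ?_
  rintro c (⟨a, ha, hc⟩ | ⟨r, hr, hc⟩)
  · exact Or.inl (Set.mem_biUnion ha hc)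
  · exact Or.inr (Set.mem_biUnion hr hc)

namespace DTree

variable {prog : Set (Rule P C)} {D : Set (Fact P C)}

def leaves : ∀ {a : Fact P C}, DTree prog D a → Multiset (Fact P C)
  | _, .leaf a _ => {a}
  | _, .node r _ _ ch => ∑ i : Fin r.nbody, (ch i).leaves

lemma mem_leaves_iff_hasLeaf {x : Fact P C} :
    ∀ {a : Fact P C} (t : DTree prog D a), x ∈ t.leaves ↔ t.hasLeaf x
  | _, .leaf a _ => by simp [leaves, hasLeaf, eq_comm]
  | _, .node r _ _ ch => by
    simp only [leaves, hasLeaf, Multiset.mem_sum, Finset.mem_univ, true_and]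
    exact exists_congr fun i => mem_leaves_iff_hasLeaf (ch i)

lemma weight_eq_prod_leaves [CommSemiring K] (lam : Fact P C → K) :
    ∀ {a : Fact P C} (t : DTree prog D a), t.weight lam = (t.leaves.map lam).prod
  | _, .leaf a _ => by simp [weight, leaves]
  | _, .node r _ _ ch => by
    rw [weight, leaves, ← Multiset.coe_mapAddMonoidHom, map_sum, Multiset.prod_sum]
    exact Finset.prod_congr rfl fun i _ => weight_eq_prod_leaves lam (ch i)

lemma mem_of_hasLeaf_imp_mem {I : Set (Fact P C)} (hI : ClosedUnder prog I) :
    ∀ {a : Fact P C} (t : DTree prog D a), (∀ x, t.hasLeaf x → x ∈ I) → a ∈ I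
  | _, .leaf a _, h => h a rfl
  | _, .node r hr σ ch, h =>
    hI r hr σ fun i => (ch i).mem_of_hasLeaf_imp_mem hI fun x hx => h x ⟨i, hx⟩

lemma hasLeaf_mem : ∀ {a : Fact P C} (t : DTree prog D a) {x : Fact P C}, t.hasLeaf x → x ∈ D
  | _, .leaf _ ha, _, h => h ▸ ha
  | _, .node _ _ _ ch, _, h => let ⟨i, hx⟩ := h; (ch i).hasLeaf_mem hx

theorem hasLeaf_of_not_entails_diff {α β : Fact P C} (hβ : ¬ Entails prog (D \ {β}) α)
    (t : DTree prog D α) : t.hasLeaf β := by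
  by_contra hβt
  exact hβ fun I hDI hI => t.mem_of_hasLeaf_imp_mem hI fun x hx =>
    hDI ⟨t.hasLeaf_mem hx, fun hxβ => hβt (hxβ ▸ hx)⟩

lemma finprod_dvd_weight [CommSemiring K] (lam : Fact P C → K) {a : Fact P C}
    (t : DTree prog D a) {s : Set (Fact P C)} (hs : ∀ β ∈ s, t.hasLeaf β) :
    ∏ᶠ β ∈ s, lam β ∣ t.weight lam := by
  have hsub : s ⊆ ↑t.leaves.toFinset := fun β hβ =>
    Multiset.mem_toFinset.2 ((mem_leaves_iff_hasLeaf t).2 (hs β hβ))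
  have hfin : s.Finite := t.leaves.toFinset.finite_toSet.subset hsub
  rw [finprod_mem_eq_finite_toFinset_prod _ hfin, Finset.prod_eq_multiset_prod,
    weight_eq_prod_leaves]
  refine Multiset.prod_dvd_prod_of_le (Multiset.map_le_map ?_)
  refine (Multiset.le_iff_subset hfin.toFinset.nodup).2 fun β hβ => ?_
  exact Multiset.mem_toFinset.1 (hsub (hfin.mem_toFinset.1 hβ))

theorem finprod_necessary_dvd_weight [CommSemiring K] (lam : Fact P C → K) {α : Fact P C}
    (t : DTree prog D α) :
    ∏ᶠ β ∈ {β ∈ D | ¬ Entails prog (D \ {β}) α}, lam β ∣ t.weight lam :=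
  t.finprod_dvd_weight lam fun _ hβ => t.hasLeaf_of_not_entails_diff hβ.2

lemma args_mem_consts :
    ∀ {a : Fact P C} (_ : DTree prog D a), ∀ c ∈ a.args, c ∈ consts prog D
  | _, .leaf a ha, c, hc => Or.inl ⟨a, ha, hc⟩
  | _, .node r hr σ ch, c, hc => by
    obtain ⟨_ | v, hv, rfl⟩ := List.mem_map.1 hc
    · exact Or.inr ⟨r, hr, hv⟩
    · obtain ⟨i, hi⟩ := r.vars_in_body v
      exact (ch i).args_mem_consts _ (List.mem_map.2 ⟨_, hi, rfl⟩)

lemma subst_mem_consts {r : Rule P C} (σ : Fin r.nvars → C)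
    (ch : ∀ i, DTree prog D ((r.body i).subst σ)) (v : Fin r.nvars) : σ v ∈ consts prog D :=
  let ⟨i, hi⟩ := r.vars_in_body v
  (ch i).args_mem_consts _ (List.mem_map.2 ⟨_, hi, rfl⟩)

lemma depth_node_le_succ_iff {r : Rule P C} {hr : r ∈ prog} {σ : Fin r.nvars → C}
    {ch : ∀ i, DTree prog D ((r.body i).subst σ)} {n : ℕ} :
    (node r hr σ ch).depth ≤ n + 1 ↔ ∀ i, (ch i).depth ≤ n := by
  simp [depth]

/-- A tree of depth at most `n + 1` is a leaf or a node whose rule comes from the finite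
program, whose homomorphism takes values in the finite set `consts prog D`, and whose children
have depth at most `n`. -/
theorem finite_depth_le (hprog : prog.Finite) (hD : D.Finite) :
    ∀ (n : ℕ) (a : Fact P C), Finite { t : DTree prog D a // t.depth ≤ n } := by
  have := hprog.to_subtype
  have := (consts_finite hprog hD).to_subtype
  intro n
  induction n with
  | zero =>
    refine fun a => Finite.of_surjective (fun h : PLift (a ∈ D) =>
      (⟨.leaf a h.down, le_rfl⟩ : { t : DTree prog D a // t.depth ≤ 0 })) ?_
    rintro ⟨_ | _, h⟩
    · exact ⟨⟨‹_›⟩, rfl⟩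
    · simp [depth] at h
  | succ n ih =>
    intro a
    let T := PLift (a ∈ D) ⊕
      Σ (r : prog) (σ : Fin r.1.nvars → consts prog D),
        PLift (r.1.head.subst (Subtype.val ∘ σ) = a) ×
          ∀ i, { t : DTree prog D ((r.1.body i).subst (Subtype.val ∘ σ)) // t.depth ≤ n }
    let f : T → { t : DTree prog D a // t.depth ≤ n + 1 }
      | .inl h => ⟨.leaf a h.down, Nat.zero_le _⟩
      | .inr ⟨r, σ, ⟨he⟩, ch⟩ => he ▸
          ⟨.node r.1 r.2 _ fun i => (ch i).1, depth_node_le_succ_iff.2 fun i => (ch i).2⟩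
    refine Finite.of_surjective f ?_
    rintro ⟨_ | ⟨r, hr, σ, ch⟩, ht⟩
    · exact ⟨.inl ⟨‹_›⟩, rfl⟩
    · exact ⟨.inr ⟨⟨r, hr⟩, fun v => ⟨σ v, subst_mem_consts σ ch v⟩, ⟨rfl⟩,
        fun i => ⟨ch i, depth_node_le_succ_iff.1 ht i⟩⟩, rfl⟩

end DTree

lemma dvd_finsum_cond {T : Type} [NonUnitalSemiring K] {p : T → Prop} {f : T → K} {c : K}
    (h : ∀ t, p t → c ∣ f t) : c ∣ ∑ᶠ (t) (_ : p t), f t :=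
  finsum_induction _ (dvd_zero c) (fun _ _ => dvd_add) fun t =>
    finsum_induction _ (dvd_zero c) (fun _ _ => dvd_add) (h t)

namespace OmegaCommSemiring

variable [OmegaCommSemiring K] {T : Type}

lemma sum_le_sum_of_subset (f : T → K) {G G' : Finset T} (h : G ⊆ G') :
    ∑ t ∈ G, f t ≤ ∑ t ∈ G', f t :=
  (le_iff_exists_add _ _).2 ⟨∑ t ∈ G' \ G, f t, by rw [add_comm, Finset.sum_sdiff h]⟩

/-- If the finite subsets of `S` are exhausted by an increasing sequence `F n`, the sum over `S`
is the supremum of the chain of sums over `F n`, and multiplication by `c` commutes with it. -/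
theorem dvd_setSum_of_exhaustion {S : Set T} {f : T → K} {c : K} (F : ℕ → Finset T)
    (hF : Monotone F) (hFS : ∀ n, ↑(F n) ⊆ S)
    (hcover : ∀ G : Finset T, ↑G ⊆ S → ∃ n, G ⊆ F n)
    (hdvd : ∀ t ∈ S, c ∣ f t) : c ∣ setSum S f := by
  choose! g hg using hdvd
  let b n := ∑ t ∈ F n, g t
  have hb : Monotone b := fun m n h => sum_le_sum_of_subset g (hF h)
  obtain ⟨e, he⟩ := chain_lub b hb
  have hce := mul_lub b c e hb he
  have hcb : ∀ n, c * b n = ∑ t ∈ F n, f t := fun n => by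
    rw [Finset.mul_sum]
    exact Finset.sum_congr rfl fun t ht => (hg t (hFS n ht)).symm
  have hlub : IsLUB (partialSums S f) (c * e) := by
    refine ⟨?_, fun y hy => hce.2 ?_⟩
    · rintro _ ⟨G, hG, rfl⟩
      obtain ⟨n, hn⟩ := hcover G hG
      calc ∑ t ∈ G, f t ≤ ∑ t ∈ F n, f t := sum_le_sum_of_subset f hn
        _ = c * b n := (hcb n).symm
        _ ≤ c * e := hce.1 ⟨n, rfl⟩
    · rintro _ ⟨n, rfl⟩
      show c * b n ≤ y
      rw [hcb n]
      exact hy ⟨F n, hFS n, rfl⟩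
  refine ⟨e, ?_⟩
  rw [setSum, dif_pos ⟨_, hlub⟩]
  exact (Exists.choose_spec (p := IsLUB (partialSums S f)) _).unique hlub

end OmegaCommSemiring

theorem dvd_AT_of_dvd_weight [OmegaCommSemiring K] {prog : Set (Rule P C)} (hprog : prog.Finite)
    {db : AnnDB P C K} (hdb : db.facts.Finite) {α : Fact P C} {c : K}
    (h : ∀ t : DTree prog db.facts α, c ∣ t.weight db.ann) : c ∣ AT prog db α := by
  have hfin n : {t : DTree prog db.facts α | t.depth ≤ n}.Finite :=
    Set.finite_coe_iff.1 (DTree.finite_depth_le hprog hdb n α)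
  refine OmegaCommSemiring.dvd_setSum_of_exhaustion (fun n => (hfin n).toFinset)
    (fun m n hmn t ht => (hfin n).mem_toFinset.2 (((hfin m).mem_toFinset.1 ht).trans hmn))
    (fun _ => Set.subset_univ _)
    (fun G _ => ⟨G.sup DTree.depth, fun t ht =>
      (hfin _).mem_toFinset.2 (Finset.le_sup (f := DTree.depth) ht)⟩)
    fun t _ => h t

/-- a necessary fact labels a leaf of every derivation tree; consequently
`AT`, `NRT`, `MDT` and `HMDT` satisfy the Necessary Facts Property. -/
theorem statement_19 (P C : Type) (prog : Set (Rule P C)) (hprog : prog.Finite)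
    (α : Fact P C) :
    (∀ D : Set (Fact P C), D.Finite → ∀ β ∈ D, ¬ Entails prog (D \ {β}) α →
        ∀ t : DTree prog D α, t.hasLeaf β)
      ∧ (∀ (K : Type) [inst : OmegaCommSemiring K], ∀ db : AnnDB P C K, db.facts.Finite →
          (∀ a ∈ db.facts, db.ann a ≠ 0) →
          ∃ e : K, AT prog db α =
            (∏ᶠ β ∈ {β ∈ db.facts | ¬ Entails prog (db.facts \ {β}) α}, db.ann β) * e)
      ∧ (∀ (K : Type) [inst : CommSemiring K], ∀ db : AnnDB P C K, db.facts.Finite →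
          (∀ a ∈ db.facts, db.ann a ≠ 0) →
          (∃ e : K, NRT prog db α =
            (∏ᶠ β ∈ {β ∈ db.facts | ¬ Entails prog (db.facts \ {β}) α}, db.ann β) * e)
          ∧ (∃ e : K, MDT prog db α =
            (∏ᶠ β ∈ {β ∈ db.facts | ¬ Entails prog (db.facts \ {β}) α}, db.ann β) * e)
          ∧ (∃ e : K, HMDT prog db α =
            (∏ᶠ β ∈ {β ∈ db.facts | ¬ Entails prog (db.facts \ {β}) α}, db.ann β) * e)) := by
  refine ⟨fun D _ β _ hβ t => t.hasLeaf_of_not_entails_diff hβ,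
    fun K _ db hdb _ => dvd_AT_of_dvd_weight hprog hdb fun t => t.finprod_necessary_dvd_weight _,
    fun K _ db _ _ => ?_⟩
  have h (t : DTree prog db.facts α) := t.finprod_necessary_dvd_weight db.ann
  exact ⟨dvd_finsum_cond fun t _ => h t, dvd_finsum_cond fun t _ => h t,
    dvd_finsum_cond fun t _ => h t⟩

end Datalog
end
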